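/- arXiv:1609.00665 — 2 statements merged into one kernel-verified Lean document; each statement's English description precedes it below -/
import Mathlib

section
/- If V ∈ ℝ is such that V² is not a natural number, then the family of vectors {(eₙ₁,ₙ₂, 0) : n₂ = 0} ∪ {(eₙ₁,ₙ₂, αₙ₂⁽±⁾ eₙ₁,ₙ₂₋₁) : n₂ ≥ 1} is complete (total) in ℓ² ⊕ ℓ²: the only vector orthogonal to all of them is zero. -/
/-!
Subtracting the two orthogonality relations at level `n₂ = m + 1` leaves
`(α⁺ - α⁻) ⟪f₂, e_{n₁,m}⟫ = 0`, and `α⁺ - α⁻ = -2i √(n₂ - V²) / √n₂` is nonzero because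
`V²` is not an integer. So every coefficient of `f₂` vanishes, hence so does every coefficient
of `f₁`, and a vector orthogonal to a Hilbert basis is zero.
-/

open Complex

/-- Principal complex square root √(n − V²). -/
noncomputable def sqVal (n : ℕ) (V : ℝ) : ℂ := ((n : ℂ) - (V : ℂ) ^ 2) ^ ((1 : ℂ) / 2)

noncomputable def aP (n : ℕ) (V : ℝ) : ℂ :=
  -Complex.I * (sqVal n V - Complex.I * V) / (Real.sqrt n : ℂ)

noncomputable def aM (n : ℕ) (V : ℝ) : ℂ :=
  Complex.I * (sqVal n V + Complex.I * V) / (Real.sqrt n : ℂ)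

theorem HilbertBasis.eq_zero_of_forall_inner_eq_zero {ι 𝕜 E : Type*} [RCLike 𝕜]
    [NormedAddCommGroup E] [InnerProductSpace 𝕜 E] (b : HilbertBasis ι 𝕜 E) {x : E}
    (h : ∀ i, inner 𝕜 x (b i) = 0) : x = 0 := by
  have hrepr : b.repr x = 0 := by
    ext i
    rw [b.repr_apply_apply, inner_eq_zero_symm.mp (h i)]
    rfl
  exact b.repr.injective (by rw [hrepr, map_zero])

theorem eq_zero_and_eq_zero_of_add_mul_eq_zero {R : Type*} [CommRing R] [NoZeroDivisors R]
    {x y a a' : R} (ha : a ≠ a') (h : x + a * y = 0) (h' : x + a' * y = 0) :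
    x = 0 ∧ y = 0 := by
  have hy : y = 0 := by
    have hdiff : (a - a') * y = 0 := by linear_combination h - h'
    exact (mul_eq_zero.mp hdiff).resolve_left (sub_ne_zero.mpr ha)
  refine ⟨?_, hy⟩
  simpa [hy] using h

theorem sqVal_ne_zero {n : ℕ} {V : ℝ} (hV : V ^ 2 ≠ n) : sqVal n V ≠ 0 := by
  intro h
  rw [sqVal, Complex.cpow_eq_zero_iff] at h
  have hcast : ((V ^ 2 : ℝ) : ℂ) = ((n : ℝ) : ℂ) := by
    push_cast
    linear_combination -h.1
  exact hV (by exact_mod_cast hcast)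

theorem aP_sub_aM (n : ℕ) (V : ℝ) :
    aP n V - aM n V = -2 * Complex.I * sqVal n V / (Real.sqrt n : ℂ) := by
  rw [aP, aM, div_sub_div_same]
  ring

theorem aP_ne_aM {n : ℕ} (hn : n ≠ 0) {V : ℝ} (hV : V ^ 2 ≠ n) : aP n V ≠ aM n V := by
  have hsqrt : (Real.sqrt n : ℂ) ≠ 0 := by
    rw [ne_eq, Complex.ofReal_eq_zero, Real.sqrt_eq_zero (Nat.cast_nonneg n)]
    exact_mod_cast hn
  rw [← sub_ne_zero, aP_sub_aM]
  exact div_ne_zero (mul_ne_zero (by simp) (sqVal_ne_zero hV)) hsqrt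

/-- If V² is not a natural number, the family of eigenvectors
{(e_{n₁,0}, 0)} ∪ {(e_{n₁,n₂}, αₙ₂⁽±⁾ e_{n₁,n₂−1}) : n₂ ≥ 1} is complete in 𝓗 ⊕ 𝓗:
any f = (f₁, f₂) orthogonal to all of them vanishes. -/
theorem stmt_13 {𝓗 : Type*} [NormedAddCommGroup 𝓗] [InnerProductSpace ℂ 𝓗]
    (b : HilbertBasis (ℕ × ℕ) ℂ 𝓗) (V : ℝ) (hV : ∀ m : ℕ, V ^ 2 ≠ (m : ℝ))
    (f₁ f₂ : 𝓗)
    (h0 : ∀ n₁ : ℕ, (inner ℂ f₁ (b (n₁, 0)) : ℂ) = 0)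
    (hP : ∀ n₁ n₂ : ℕ, 1 ≤ n₂ →
      (inner ℂ f₁ (b (n₁, n₂)) : ℂ) + aP n₂ V * (inner ℂ f₂ (b (n₁, n₂ - 1)) : ℂ) = 0)
    (hM : ∀ n₁ n₂ : ℕ, 1 ≤ n₂ →
      (inner ℂ f₁ (b (n₁, n₂)) : ℂ) + aM n₂ V * (inner ℂ f₂ (b (n₁, n₂ - 1)) : ℂ) = 0) :
    f₁ = 0 ∧ f₂ = 0 := by
  have hshift (n₁ m : ℕ) :
      inner ℂ f₁ (b (n₁, m + 1)) = 0 ∧ inner ℂ f₂ (b (n₁, m)) = 0 :=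
    eq_zero_and_eq_zero_of_add_mul_eq_zero (aP_ne_aM m.succ_ne_zero (hV (m + 1)))
      (hP n₁ (m + 1) le_add_self) (hM n₁ (m + 1) le_add_self)
  refine ⟨b.eq_zero_of_forall_inner_eq_zero ?_, b.eq_zero_of_forall_inner_eq_zero ?_⟩
  · rintro ⟨n₁, _ | m⟩
    exacts [h0 n₁, (hshift n₁ m).1]
  · rintro ⟨n₁, m⟩
    exact (hshift n₁ m).2
end

section
/- If V² = m₀ for some positive integer m₀, then the family {(eₙ₁,₀, 0)} ∪ {(eₙ₁,ₙ₂, αₙ₂⁽±⁾eₙ₁,ₙ₂₋₁) : n₂ ≥ 1} is NOT complete in 𝓗 ⊕ 𝓗: the nonzero vector (e₀,ₘ₀, e₀,ₘ₀₋₁) is orthogonal to every member of the family. -/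
open Complex

/-! At the resonance `V² = n` the square root `√(n − V²)` vanishes and `√n = V`,
so both coefficients collapse to `∓i · (∓iV) / V = -1`. The vector
`(e_{0,m₀}, e_{0,m₀-1})` then pairs with `(e_{n₁,n₂}, α e_{n₁,n₂-1})` to `1 + α = 0`
when `(n₁, n₂) = (0, m₀)`, and to `0` otherwise by orthonormality. -/

section Resonance

variable {n : ℕ} {V : ℝ}

lemma sqVal_eq_zero_of_sq_eq (hV : V ^ 2 = n) : sqVal n V = 0 := by
  have hdiff : (n : ℂ) - (V : ℂ) ^ 2 = 0 := by
    rw [sub_eq_zero]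
    exact_mod_cast hV.symm
  rw [sqVal, hdiff, zero_cpow (by norm_num)]

lemma sqrt_natCast_eq_of_sq_eq (hV0 : 0 < V) (hV : V ^ 2 = n) : Real.sqrt n = V := by
  rw [← hV, Real.sqrt_sq hV0.le]

lemma aP_eq_neg_one_of_sq_eq (hV0 : 0 < V) (hV : V ^ 2 = n) : aP n V = -1 := by
  have hV' : (V : ℂ) ≠ 0 := by exact_mod_cast hV0.ne'
  rw [aP, sqVal_eq_zero_of_sq_eq hV, sqrt_natCast_eq_of_sq_eq hV0 hV,
    div_eq_iff hV']
  linear_combination (V : ℂ) * I_sq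

lemma aM_eq_neg_one_of_sq_eq (hV0 : 0 < V) (hV : V ^ 2 = n) : aM n V = -1 := by
  have hV' : (V : ℂ) ≠ 0 := by exact_mod_cast hV0.ne'
  rw [aM, sqVal_eq_zero_of_sq_eq hV, sqrt_natCast_eq_of_sq_eq hV0 hV,
    div_eq_iff hV']
  linear_combination (V : ℂ) * I_sq

end Resonance

section Orthonormal

variable {E : Type*} [NormedAddCommGroup E] [InnerProductSpace ℂ E] {b : ℕ × ℕ → E}

lemma Orthonormal.inner_apply_zero_snd_eq_zero (hb : Orthonormal ℂ b) {m : ℕ} (hm : m ≠ 0)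
    (n₁ : ℕ) : inner ℂ (b (0, m)) (b (n₁, 0)) = 0 :=
  hb.inner_eq_zero (by simp [hm])

lemma Orthonormal.inner_add_mul_inner_pred_eq_zero (hb : Orthonormal ℂ b) {α : ℕ → ℂ}
    {m : ℕ} (hm : 1 ≤ m) (hα : α m = -1) {n₁ n₂ : ℕ} (hn₂ : 1 ≤ n₂) :
    inner ℂ (b (0, m)) (b (n₁, n₂)) + α n₂ * inner ℂ (b (0, m - 1)) (b (n₁, n₂ - 1)) = 0 := by
  by_cases h : (n₁, n₂) = (0, m)
  · obtain ⟨rfl, rfl⟩ : n₁ = 0 ∧ n₂ = m := Prod.ext_iff.mp h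
    simp [hb.1, hα]
  · have h' : (0, m - 1) ≠ (n₁, n₂ - 1) := by
      simp only [ne_eq, Prod.ext_iff] at h ⊢
      omega
    rw [hb.inner_eq_zero (Ne.symm h), hb.inner_eq_zero h', mul_zero, add_zero]

end Orthonormal

/-- If V² = m₀ ∈ ℕ₊, the eigenvector family is NOT complete: the nonzero vector
(e_{0,m₀}, e_{0,m₀−1}) is orthogonal to every member of the family. -/
theorem stmt_14 {𝓗 : Type*} [NormedAddCommGroup 𝓗] [InnerProductSpace ℂ 𝓗]
    (b : HilbertBasis (ℕ × ℕ) ℂ 𝓗) (V : ℝ) (hV0 : 0 < V) (m₀ : ℕ) (hm : 1 ≤ m₀)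
    (hV : V ^ 2 = (m₀ : ℝ)) :
    b (0, m₀) ≠ 0 ∧
    (∀ n₁ : ℕ, (inner ℂ (b (0, m₀)) (b (n₁, 0)) : ℂ) = 0) ∧
    (∀ n₁ n₂ : ℕ, 1 ≤ n₂ →
      (inner ℂ (b (0, m₀)) (b (n₁, n₂)) : ℂ)
        + aP n₂ V * (inner ℂ (b (0, m₀ - 1)) (b (n₁, n₂ - 1)) : ℂ) = 0) ∧
    (∀ n₁ n₂ : ℕ, 1 ≤ n₂ →
      (inner ℂ (b (0, m₀)) (b (n₁, n₂)) : ℂ)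
        + aM n₂ V * (inner ℂ (b (0, m₀ - 1)) (b (n₁, n₂ - 1)) : ℂ) = 0) := by
  have hb := b.orthonormal
  refine ⟨hb.ne_zero _, hb.inner_apply_zero_snd_eq_zero (by omega), fun n₁ n₂ hn₂ => ?_,
    fun n₁ n₂ hn₂ => ?_⟩
  · exact hb.inner_add_mul_inner_pred_eq_zero (α := (aP · V)) hm
      (aP_eq_neg_one_of_sq_eq hV0 hV) hn₂
  · exact hb.inner_add_mul_inner_pred_eq_zero (α := (aM · V)) hm
      (aM_eq_neg_one_of_sq_eq hV0 hV) hn₂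
end
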